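/- arXiv:1806.10020 — 3 statements merged into one kernel-verified Lean document; each statement's English description precedes it below -/
import Mathlib

section
/- The spectrum of the operator B on c₀ equals the set S = {λ ∈ ℂ : (|λ - r₁|⋯|λ - r_l|)^{1/l} ≤ (|s₁|⋯|s_{l'}|)^{1/l'}}. -/
/-!
The operator is lower bidiagonal, `(B x)ₖ = aₖ xₖ + bₖ₋₁ xₖ₋₁`, with `a` of period `l` and `b` of
period `l'`, so products of `|b/(λ - a)|` over `L = l l'` consecutive indices all equal
`∏|sⱼ|^l / ∏|λ - rᵢ|^l'`.

If this ratio is `< 1`, then `λ - B = D (1 - W)` with `D` the invertible diagonal `λ - a` and `W`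
a weighted shift with `‖W^L‖ < 1`, so `λ - B` is invertible.

Otherwise the left eigen-sequence `yₖ₊₁ bₖ = yₖ (λ - aₖ)`, `y₀ = 1`, changes by the inverse ratio
`≤ 1` over each period and is bounded. Pairing `y` with `(λ - B) x` telescopes,
`∑_{k ≤ n} yₖ ((λ - B) x)ₖ = yₙ₊₁ bₙ xₙ → 0`, so the first unit vector is not in the range.
-/

open Filter Topology Fin.NatCast Finset Function
open scoped ZeroAtInfty BoundedContinuousFunction

theorem Real.rpow_one_div_le_rpow_one_div_iff {x y : ℝ} (hx : 0 ≤ x) (hy : 0 ≤ y) {p q : ℕ}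
    (hp : p ≠ 0) (hq : q ≠ 0) : x ^ ((1 : ℝ) / p) ≤ y ^ ((1 : ℝ) / q) ↔ x ^ q ≤ y ^ p := by
  have key : ∀ z : ℝ, 0 ≤ z → ∀ a b : ℕ, a ≠ 0 → (z ^ ((1 : ℝ) / a)) ^ (a * b) = z ^ b :=
    fun z hz a b ha => by rw [pow_mul, one_div, Real.rpow_inv_natCast_pow hz ha]
  rw [← pow_le_pow_iff_left₀ (Real.rpow_nonneg hx _) (Real.rpow_nonneg hy _) (mul_ne_zero hp hq),
    key x hx p q hp, mul_comm, key y hy q p hq]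

section Products

variable {M : Type*} [CommMonoid M]

theorem Fin.prod_range_natCast_add {p : ℕ} [NeZero p] (g : Fin p → M) (k : ℕ) :
    ∏ j ∈ range p, g ↑(k + j) = ∏ i, g i := by
  simp_rw [Nat.cast_add]
  rw [← Fin.prod_univ_eq_prod_range (fun j => g (↑k + ↑j)) p]
  simp_rw [Fin.cast_val_eq_self]
  exact Equiv.prod_comp (Equiv.addLeft (k : Fin p)) g

theorem Fin.prod_range_mul_natCast_add {p : ℕ} [NeZero p] (g : Fin p → M) (m k : ℕ) :
    ∏ j ∈ range (m * p), g ↑(k + j) = (∏ i, g i) ^ m := by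
  induction m with
  | zero => simp
  | succ m ih =>
    rw [add_mul, one_mul, prod_range_add, ih, pow_succ]
    simp_rw [← add_assoc]
    rw [Fin.prod_range_natCast_add]

end Products

theorem Function.Periodic.exists_forall_norm_prod_range_le {R : Type*} [SeminormedCommRing R]
    {z : ℕ → R} {L : ℕ} (hz : Periodic z L) (hL : 0 < L) (h1 : ‖∏ j ∈ range L, z j‖ ≤ 1) :
    ∃ C, ∀ n, ‖∏ j ∈ range n, z j‖ ≤ C := by
  set y : ℕ → R := fun n => ∏ j ∈ range n, z j
  have hstep : ∀ n, ‖y (n + L)‖ ≤ ‖y n‖ := fun n => by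
    have : y (n + L) = y L * y n := by
      simp only [y]
      rw [add_comm n L, prod_range_add]
      exact congrArg _ (prod_congr rfl fun j _ => by rw [add_comm, hz])
    rw [this]
    exact (norm_mul_le _ _).trans (mul_le_of_le_one_left (norm_nonneg _) h1)
  have hblock : ∀ m q, ‖y (m + q * L)‖ ≤ ‖y m‖ := fun m q => by
    induction q with
    | zero => simp
    | succ q ih =>
      rw [add_mul, one_mul, ← add_assoc]
      exact (hstep _).trans ih
  refine ⟨∑ m ∈ range L, ‖y m‖, fun n => ?_⟩
  calc ‖y n‖ = ‖y (n % L + n / L * L)‖ := by rw [Nat.mod_add_div']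
    _ ≤ ‖y (n % L)‖ := hblock _ _
    _ ≤ ∑ m ∈ range L, ‖y m‖ :=
      single_le_sum (fun m _ => norm_nonneg (y m)) (mem_range.2 (Nat.mod_lt n hL))

theorem isUnit_one_sub_of_norm_pow_lt_one {A : Type*} [NormedRing A] [CompleteSpace A] {a : A}
    {n : ℕ} (h : ‖a ^ n‖ < 1) : IsUnit (1 - a) := by
  have hcomm : Commute (1 - a) (∑ i ∈ range n, a ^ i) :=
    (mul_neg_geom_sum a n).trans (geom_sum_mul_neg a n).symm
  have hunit : IsUnit ((1 - a) * ∑ i ∈ range n, a ^ i) := by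
    rw [mul_neg_geom_sum]
    exact (Units.oneSub _ h).isUnit
  exact (hcomm.isUnit_mul_iff.1 hunit).1

namespace ZeroAtInftyContinuousMap

variable {α 𝕜 : Type*} [TopologicalSpace α] [NontriviallyNormedField 𝕜]

theorem tendsto_atTop_nat {β : Type*} [TopologicalSpace β] [Zero β] (x : C₀(ℕ, β)) :
    Tendsto x atTop (𝓝 0) := by
  simpa [cocompact_eq_atTop] using x.zero_at_infty'

noncomputable def multiplier : (α →ᵇ 𝕜) →* (C₀(α, 𝕜) →L[𝕜] C₀(α, 𝕜)) where
  toFun f := LinearMap.mkContinuous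
    { toFun := fun g => ⟨⟨f * g, f.continuous.mul g.continuous⟩, by
        refine squeeze_zero_norm (fun x => ?_)
          (by simpa using (zero_at_infty g).norm.const_mul ‖f‖)
        exact (norm_mul (f x) (g x)).trans_le
          (mul_le_mul_of_nonneg_right (f.norm_coe_le_norm x) (norm_nonneg _))⟩
      map_add' := fun g h => by ext; simp [mul_add]
      map_smul' := fun c g => by ext; simp }
    ‖f‖ fun g => (BoundedContinuousFunction.norm_le (by positivity)).2 fun x =>
      (norm_mul (f x) (g x)).trans_le <| mul_le_mul (f.norm_coe_le_norm x)
        (g.toBCF.norm_coe_le_norm x) (norm_nonneg _) (norm_nonneg _)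
  map_one' := by ext; simp
  map_mul' f g := by ext; simp [mul_assoc]

@[simp]
theorem multiplier_apply_apply (f : α →ᵇ 𝕜) (g : C₀(α, 𝕜)) (x : α) :
    multiplier f g x = f x * g x :=
  rfl

theorem smul_one_sub_apply (T : C₀(ℕ, 𝕜) →L[𝕜] C₀(ℕ, 𝕜)) (lam : 𝕜) (x : C₀(ℕ, 𝕜)) (k : ℕ) :
    (lam • 1 - T) x k = lam * x k - T x k := by
  simp

end ZeroAtInftyContinuousMap

section Bidiagonal

variable {𝕜 : Type*} [NontriviallyNormedField 𝕜]

def IsWeightedShift (T : C₀(ℕ, 𝕜) →L[𝕜] C₀(ℕ, 𝕜)) (w : ℕ → 𝕜) : Prop :=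
  (∀ x, T x 0 = 0) ∧ ∀ x k, T x (k + 1) = w k * x k

def IsLowerBidiagonal (B : C₀(ℕ, 𝕜) →L[𝕜] C₀(ℕ, 𝕜)) (a b : ℕ → 𝕜) : Prop :=
  (∀ x, B x 0 = a 0 * x 0) ∧ ∀ x k, B x (k + 1) = b k * x k + a (k + 1) * x (k + 1)

namespace IsWeightedShift

variable {T : C₀(ℕ, 𝕜) →L[𝕜] C₀(ℕ, 𝕜)} {w : ℕ → 𝕜}

theorem pow_apply_of_lt (hT : IsWeightedShift T w) {n k : ℕ} (hk : k < n) (x : C₀(ℕ, 𝕜)) :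
    (T ^ n) x k = 0 := by
  induction n generalizing k with
  | zero => omega
  | succ n ih =>
    rw [pow_succ', mul_apply_eq_comp]
    cases k with
    | zero => exact hT.1 _
    | succ k => rw [hT.2, ih (by omega), mul_zero]

theorem pow_apply_add (hT : IsWeightedShift T w) (n k : ℕ) (x : C₀(ℕ, 𝕜)) :
    (T ^ n) x (k + n) = (∏ j ∈ range n, w (k + j)) * x k := by
  induction n with
  | zero => simp
  | succ n ih =>
    rw [pow_succ', mul_apply_eq_comp, ← add_assoc, hT.2, ih, prod_range_succ]
    ring

theorem norm_pow_le (hT : IsWeightedShift T w) {n : ℕ} {t : ℝ}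
    (ht : ∀ k, ∏ j ∈ range n, ‖w (k + j)‖ ≤ t) : ‖T ^ n‖ ≤ t := by
  have ht0 : 0 ≤ t := (prod_nonneg fun j _ => norm_nonneg _).trans (ht 0)
  refine ContinuousLinearMap.opNorm_le_bound _ ht0 fun x =>
    (BoundedContinuousFunction.norm_le (by positivity)).2 fun m => ?_
  obtain hm | hm := lt_or_ge m n
  · show ‖(T ^ n) x m‖ ≤ t * ‖x‖
    rw [hT.pow_apply_of_lt hm x, norm_zero]
    positivity
  · obtain ⟨k, rfl⟩ := Nat.exists_eq_add_of_le' hm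
    show ‖(T ^ n) x (k + n)‖ ≤ t * ‖x‖
    rw [hT.pow_apply_add, norm_mul, norm_prod]
    exact mul_le_mul (ht k) (x.toBCF.norm_coe_le_norm k) (norm_nonneg _) ht0

end IsWeightedShift

namespace IsLowerBidiagonal

open ZeroAtInftyContinuousMap

variable {B : C₀(ℕ, 𝕜) →L[𝕜] C₀(ℕ, 𝕜)} {a b : ℕ → 𝕜} {lam : 𝕜}

theorem notMem_spectrum [CompleteSpace 𝕜] (hB : IsLowerBidiagonal B a b) {d e : ℕ →ᵇ 𝕜}
    (hd : ∀ k, d k = lam - a k) (hde : d * e = 1) {L : ℕ} {τ : ℝ} (hτ : τ < 1)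
    (hprod : ∀ k, ∏ j ∈ range L, ‖e (k + j + 1) * b (k + j)‖ ≤ τ) :
    lam ∉ spectrum 𝕜 B := by
  have hed : ∀ k, e k * (lam - a k) = 1 := fun k => by
    rw [← hd, mul_comm]; exact congrArg (· k) hde
  have hD : IsUnit (multiplier d) :=
    ⟨⟨multiplier d, multiplier e, by rw [← map_mul, hde, map_one],
      by rw [← map_mul, mul_comm, hde, map_one]⟩, rfl⟩
  set W := 1 - multiplier e * (lam • 1 - B) with hW_def
  have hW_apply : ∀ x k, W x k = x k - e k * (lam * x k - B x k) := fun x k => rfl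
  have hW : IsWeightedShift W fun k => e (k + 1) * b k := by
    refine ⟨fun x => ?_, fun x k => ?_⟩
    · rw [hW_apply, hB.1]
      linear_combination (-x 0) * hed 0
    · rw [hW_apply, hB.2]
      linear_combination (-x (k + 1)) * hed (k + 1)
  have hfac : lam • 1 - B = multiplier d * (1 - W) := by
    rw [show 1 - W = multiplier e * (lam • 1 - B) by rw [hW_def]; abel, ← mul_assoc, ← map_mul,
      hde, map_one, one_mul]
  have hW1 : IsUnit (1 - W) := isUnit_one_sub_of_norm_pow_lt_one
    (A := C₀(ℕ, 𝕜) →L[𝕜] C₀(ℕ, 𝕜)) ((hW.norm_pow_le hprod).trans_lt hτ)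
  rw [spectrum.notMem_iff, Algebra.algebraMap_eq_smul_one, hfac]
  exact hD.mul hW1

theorem sum_range_succ_mul_apply (hB : IsLowerBidiagonal B a b) {y : ℕ → 𝕜}
    (hy : ∀ k, y k * (lam - a k) = y (k + 1) * b k) (x : C₀(ℕ, 𝕜)) (n : ℕ) :
    ∑ k ∈ range (n + 1), y k * (lam • 1 - B) x k = y (n + 1) * b n * x n := by
  induction n with
  | zero =>
    rw [zero_add, sum_range_one, smul_one_sub_apply, hB.1]
    linear_combination x 0 * hy 0
  | succ n ih =>
    rw [sum_range_succ, ih, smul_one_sub_apply, hB.2]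
    linear_combination x (n + 1) * hy (n + 1)

theorem mem_spectrum (hB : IsLowerBidiagonal B a b) {y : ℕ → 𝕜} (hy0 : y 0 ≠ 0)
    (hy : ∀ k, y k * (lam - a k) = y (k + 1) * b k) {C : ℝ} (hC : ∀ k, ‖y (k + 1) * b k‖ ≤ C) :
    lam ∈ spectrum 𝕜 B := by
  obtain ⟨δ, hδ0, hδ⟩ : ∃ δ : C₀(ℕ, 𝕜), δ 0 = 1 ∧ ∀ k, δ (k + 1) = 0 := by
    refine ⟨⟨⟨(Pi.single 0 1 : ℕ → 𝕜), continuous_of_discreteTopology⟩, ?_⟩,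
      Pi.single_eq_same (M := fun _ => 𝕜) 0 1,
      fun k => Pi.single_eq_of_ne (M := fun _ => 𝕜) (Nat.succ_ne_zero k) 1⟩
    rw [cocompact_eq_atTop]
    exact tendsto_const_nhds.congr'
      ((eventually_ne_atTop 0).mono fun k hk =>
        (Pi.single_eq_of_ne (M := fun _ => 𝕜) hk 1).symm)
  rw [spectrum.mem_iff, Algebra.algebraMap_eq_smul_one]
  rintro ⟨U, hU⟩
  set x := (↑U⁻¹ : C₀(ℕ, 𝕜) →L[𝕜] C₀(ℕ, 𝕜)) δ
  have hx : (lam • 1 - B) x = δ := by rw [← hU, ← mul_apply_eq_comp, U.mul_inv]; rfl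
  have hconst : ∀ n, y (n + 1) * b n * x n = y 0 := fun n => by
    rw [← hB.sum_range_succ_mul_apply hy, hx, sum_range_succ', sum_eq_zero fun k _ => by
      rw [hδ, mul_zero], hδ0, mul_one, zero_add]
  have hlim : Tendsto (fun n => y (n + 1) * b n * x n) atTop (𝓝 0) := by
    refine squeeze_zero_norm (fun n => ?_) (by simpa using x.tendsto_atTop_nat.norm.const_mul C)
    rw [norm_mul]
    exact mul_le_mul_of_nonneg_right (hC n) (norm_nonneg _)
  simp only [hconst] at hlim
  exact hy0 (tendsto_nhds_unique tendsto_const_nhds hlim)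

end IsLowerBidiagonal

end Bidiagonal

noncomputable def BoundedContinuousFunction.natPeriodic {β : Type*} [SeminormedAddCommGroup β]
    {p : ℕ} [NeZero p] (g : Fin p → β) : ℕ →ᵇ β :=
  ofNormedAddCommGroupDiscrete (fun k => g k) ‖g‖ fun k => norm_le_pi_norm g k

@[simp]
theorem BoundedContinuousFunction.natPeriodic_apply {β : Type*} [SeminormedAddCommGroup β]
    {p : ℕ} [NeZero p] (g : Fin p → β) (k : ℕ) : natPeriodic g k = g k :=
  rfl

namespace IsLowerBidiagonal

open BoundedContinuousFunction

variable {l l' : ℕ} [NeZero l] [NeZero l'] {r : Fin l → ℂ} {s : Fin l' → ℂ}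
  {B : C₀(ℕ, ℂ) →L[ℂ] C₀(ℕ, ℂ)} {lam : ℂ}

theorem notMem_spectrum_of_prod_lt (hB : IsLowerBidiagonal B (fun k => r k) (fun k => s k))
    (h : (∏ j, ‖s j‖) ^ l < (∏ i, ‖lam - r i‖) ^ l') : lam ∉ spectrum ℂ B := by
  have hpos : 0 < (∏ i, ‖lam - r i‖) ^ l' := (by positivity : (0 : ℝ) ≤ _).trans_lt h
  have hr : ∀ i, lam - r i ≠ 0 := fun i hi => hpos.ne' <| by
    rw [prod_eq_zero (mem_univ i) (by rw [hi, norm_zero]), zero_pow (NeZero.ne l')]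
  refine hB.notMem_spectrum (d := natPeriodic fun i => lam - r i)
    (e := natPeriodic fun i => (lam - r i)⁻¹) (L := l * l') (fun k => rfl)
    (by ext k; simp [hr]) ((div_lt_one hpos).2 h) fun k => le_of_eq ?_
  have hs_prod : ∏ j ∈ range (l * l'), ‖s ↑(k + j)‖ = (∏ j, ‖s j‖) ^ l :=
    Fin.prod_range_mul_natCast_add (fun j => ‖s j‖) l k
  have hr_prod : ∏ j ∈ range (l * l'), ‖lam - r ↑(k + j + 1)‖ = (∏ i, ‖lam - r i‖) ^ l' := by
    rw [mul_comm]
    simpa only [add_right_comm] using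
      Fin.prod_range_mul_natCast_add (fun i => ‖lam - r i‖) l' (k + 1)
  simp only [natPeriodic_apply, norm_mul, norm_inv, prod_mul_distrib, prod_inv_distrib, hs_prod,
    hr_prod, div_eq_inv_mul]

theorem mem_spectrum_of_prod_le (hB : IsLowerBidiagonal B (fun k => r k) (fun k => s k))
    (hs : ∀ j, s j ≠ 0)
    (h : (∏ i, ‖lam - r i‖) ^ l' ≤ (∏ j, ‖s j‖) ^ l) : lam ∈ spectrum ℂ B := by
  set z : ℕ → ℂ := fun j => (lam - r j) / s j
  have hz : Periodic z (l * l') := fun j => by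
    have hl : ((j + l * l' : ℕ) : Fin l) = j :=
      Fin.ext (by simp only [Fin.val_natCast, Nat.add_mul_mod_self_left])
    have hl' : ((j + l * l' : ℕ) : Fin l') = j :=
      Fin.ext (by simp only [Fin.val_natCast, Nat.add_mul_mod_self_right])
    simp only [z, hl, hl']
  have hz_prod : ‖∏ j ∈ range (l * l'), z j‖ ≤ 1 := by
    have hr_prod := Fin.prod_range_mul_natCast_add (fun i => ‖lam - r i‖) l' 0
    have hs_prod := Fin.prod_range_mul_natCast_add (fun j => ‖s j‖) l 0
    simp only [zero_add] at hr_prod hs_prod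
    rw [norm_prod]
    simp only [z, norm_div, prod_div_distrib]
    rw [hs_prod, mul_comm, hr_prod]
    exact div_le_one_of_le₀ h (pow_pos (prod_pos fun j _ => norm_pos_iff.2 (hs j)) l).le
  obtain ⟨C, hC⟩ :=
    hz.exists_forall_norm_prod_range_le (Nat.mul_pos (NeZero.pos l) (NeZero.pos l')) hz_prod
  refine hB.mem_spectrum (y := fun n => ∏ j ∈ range n, z j) (by simp) (fun k => ?_)
    (C := C * ‖s‖) fun k => ?_
  · rw [prod_range_succ, mul_assoc, div_mul_cancel₀ _ (hs _)]
  · rw [norm_mul]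
    exact mul_le_mul (hC _) (norm_le_pi_norm s _) (norm_nonneg _) ((norm_nonneg _).trans (hC 0))

end IsLowerBidiagonal

/-- The spectrum of `B` on `c₀` equals
`S = {λ : (|λ-r₁|⋯|λ-r_l|)^{1/l} ≤ (|s₁|⋯|s_{l'}|)^{1/l'}}`. -/
theorem stmt_3 (l l' : ℕ) [NeZero l] [NeZero l'] (r : Fin l → ℂ) (s : Fin l' → ℂ)
    (hs : ∀ j, s j ≠ 0)
    (B : ZeroAtInftyContinuousMap ℕ ℂ →L[ℂ] ZeroAtInftyContinuousMap ℕ ℂ)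
    (hB0 : ∀ x : ZeroAtInftyContinuousMap ℕ ℂ, B x 0 = r 0 * x 0)
    (hB : ∀ (x : ZeroAtInftyContinuousMap ℕ ℂ) (k : ℕ),
      B x (k + 1) = s (↑k) * x k + r (↑(k + 1)) * x (k + 1)) :
    spectrum ℂ B = {lam : ℂ | (∏ i, ‖lam - r i‖) ^ ((1 : ℝ) / l) ≤
      (∏ j, ‖s j‖) ^ ((1 : ℝ) / l')} := by
  have hB' : IsLowerBidiagonal B (fun k => r k) (fun k => s k) :=
    ⟨fun x => by simpa using hB0 x, hB⟩
  ext lam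
  rw [Set.mem_ofPred_eq, Real.rpow_one_div_le_rpow_one_div_iff (by positivity) (by positivity)
    (NeZero.ne l) (NeZero.ne l')]
  exact ⟨fun hmem => not_lt.1 fun hlt => hB'.notMem_spectrum_of_prod_lt hlt hmem,
    hB'.mem_spectrum_of_prod_le hs⟩
end

section
/- If λ ∈ ℂ satisfies (|λ - r₁|⋯|λ - r_l|)^{1/l} < (|s₁|⋯|s_{l'}|)^{1/l'}, then any complex sequence x = (x_k) satisfying r_{k mod l + 1} x_k + s_{k mod l' + 1} x_{k+1} = λ x_k for all k ≥ 0 with x₀ ≠ 0 belongs to ℓ¹; conversely, if (|λ - r₁|⋯|λ - r_l|)^{1/l} ≥ (|s₁|⋯|s_{l'}|)^{1/l'} and x₀ ≠ 0, then x ∉ ℓ¹. -/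
/-!
Solving for `x (k + 1)` turns the recurrence into `x (k + 1) = g k * x k` with
`g k = (λ - r k) / s k`, and `g` is periodic with period `L = lcm l l'`. Hence
`x (k + L) = C * x k` with `C = ∏_{j < L} g j`, and
`‖C‖ = (|λ - r₁|⋯|λ - r_l|)^{L/l} / (|s₁|⋯|s_{l'}|)^{L/l'}`, which is `< 1` exactly when the
`l`-th root of the first product is smaller than the `l'`-th root of the second.
If `‖C‖ < 1`, each residue class of `x` mod `L` is dominated by a geometric series;
if `‖C‖ ≥ 1`, then `‖x (q * L)‖ ≥ ‖x 0‖ > 0` for all `q`, so `x` does not tend to `0`.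
-/

open Filter Topology Finset Fin.NatCast

theorem Fin.periodic_natCast_of_dvd {n m : ℕ} [NeZero n] (h : n ∣ m) :
    Function.Periodic (fun k : ℕ => (k : Fin n)) m := by
  obtain ⟨t, rfl⟩ := h
  intro k
  simp

section Periodic

variable {M : Type*} [CommMonoid M]

theorem Function.Periodic.prod_range_mul_eq_pow {g : ℕ → M} {p : ℕ}
    (hg : Function.Periodic g p) (q : ℕ) :
    ∏ j ∈ range (q * p), g j = (∏ j ∈ range p, g j) ^ q := by
  induction q with
  | zero => simp
  | succ q ih =>
    rw [add_one_mul, prod_range_add, ih, pow_succ]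
    congr 1
    refine prod_congr rfl fun j _ => ?_
    rw [add_comm]
    simpa using hg.nat_mul q j

theorem Fin.prod_range_eq_pow_of_dvd {n m : ℕ} [NeZero n] (f : Fin n → M) (h : n ∣ m) :
    ∏ j ∈ range m, f j = (∏ i, f i) ^ (m / n) := by
  obtain ⟨t, rfl⟩ := h
  have hper : Function.Periodic (fun j : ℕ => f j) n :=
    (Fin.periodic_natCast_of_dvd dvd_rfl).comp f
  rw [Nat.mul_div_cancel_left _ (Nat.pos_of_neZero n), mul_comm,
    hper.prod_range_mul_eq_pow, prod_range (fun j => f j)]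
  simp only [Fin.cast_val_eq_self]

variable {x g : ℕ → M}

theorem eq_prod_range_mul_of_succ (hx : ∀ k, x (k + 1) = g k * x k) (n : ℕ) :
    x n = (∏ j ∈ range n, g j) * x 0 := by
  induction n with
  | zero => simp
  | succ n ih => rw [hx, ih, prod_range_succ, mul_left_comm, mul_assoc]

theorem add_period_eq_prod_mul_of_succ (hx : ∀ k, x (k + 1) = g k * x k) {p : ℕ}
    (hg : Function.Periodic g p) (k : ℕ) : x (k + p) = (∏ j ∈ range p, g j) * x k := by
  induction k with
  | zero => rw [zero_add, eq_prod_range_mul_of_succ hx]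
  | succ k ih =>
    rw [add_right_comm, hx, ih, hg, hx, mul_left_comm]

end Periodic

section Summability

variable {E : Type*} {f : ℕ → E} {p : ℕ} [NeZero p]

theorem summable_norm_of_norm_add_period_le [SeminormedAddCommGroup E] {ρ : ℝ} (hρ0 : 0 ≤ ρ)
    (hρ1 : ρ < 1) (hf : ∀ k, ‖f (k + p)‖ ≤ ρ * ‖f k‖) : Summable fun k => ‖f k‖ := by
  have hiter : ∀ q k, ‖f (q * p + k)‖ ≤ ρ ^ q * ‖f k‖ := by
    intro q k
    induction q with
    | zero => simp
    | succ q ih =>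
      rw [add_one_mul, add_right_comm, pow_succ, mul_comm _ ρ, mul_assoc]
      exact (hf _).trans (mul_le_mul_of_nonneg_left ih hρ0)
  rw [← (Nat.divModEquiv p).symm.summable_iff]
  have hgeom : Summable fun q : ℕ => ρ ^ q := summable_geometric_of_lt_one hρ0 hρ1
  have hfin : Summable fun m : Fin p => ‖f m‖ := Summable.of_finite
  exact Summable.of_nonneg_of_le (fun _ => norm_nonneg _) (fun i => hiter i.1 i.2)
    (hgeom.mul_of_nonneg hfin (fun _ => pow_nonneg hρ0 _) (fun _ => norm_nonneg _))

theorem not_tendsto_zero_of_norm_le_norm_add_period [NormedAddCommGroup E]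
    (hf : ∀ k, ‖f k‖ ≤ ‖f (k + p)‖) (h0 : f 0 ≠ 0) : ¬ Tendsto f atTop (𝓝 0) := by
  intro htend
  have hlower : ∀ q, ‖f 0‖ ≤ ‖f (q * p)‖ := by
    intro q
    induction q with
    | zero => simp
    | succ q ih => exact ih.trans (by rw [add_one_mul]; exact hf _)
  have hsub : Tendsto (fun q => f (q * p)) atTop (𝓝 0) :=
    htend.comp (tendsto_id.atTop_mul_const' (Nat.pos_of_neZero p))
  have : ‖f 0‖ ≤ 0 := ge_of_tendsto' (by simpa using hsub.norm) hlower
  exact h0 (norm_le_zero_iff.1 this)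

end Summability

theorem memℓp_one_iff_summable_norm {E : Type*} [NormedAddCommGroup E] {f : ℕ → E} :
    Memℓp f 1 ↔ Summable fun k => ‖f k‖ := by
  simp [memℓp_gen_iff (p := 1) (by norm_num)]

theorem Real.rpow_one_div_pow_of_dvd {x : ℝ} (hx : 0 ≤ x) {n m : ℕ} (hn : n ≠ 0) (h : n ∣ m) :
    (x ^ ((1 : ℝ) / n)) ^ m = x ^ (m / n) := by
  obtain ⟨t, rfl⟩ := h
  rw [pow_mul, one_div, Real.rpow_inv_natCast_pow hx hn,
    Nat.mul_div_cancel_left _ (Nat.pos_of_ne_zero hn)]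

/-- If `x` solves the transposed eigenvalue recurrence with `x₀ ≠ 0`, then
`x ∈ ℓ¹` when `(|λ-r₁|⋯|λ-r_l|)^{1/l} < (|s₁|⋯|s_{l'}|)^{1/l'}`, and `x ∉ ℓ¹` when
`(|λ-r₁|⋯|λ-r_l|)^{1/l} ≥ (|s₁|⋯|s_{l'}|)^{1/l'}`. -/
theorem stmt_7 (l l' : ℕ) [NeZero l] [NeZero l'] (r : Fin l → ℂ) (s : Fin l' → ℂ)
    (hs : ∀ j, s j ≠ 0) (lam : ℂ) (x : ℕ → ℂ)
    (hrec : ∀ k : ℕ, r (↑k) * x k + s (↑k) * x (k + 1) = lam * x k)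
    (hx0 : x 0 ≠ 0) :
    ((∏ i, ‖lam - r i‖) ^ ((1 : ℝ) / l) <
        (∏ j, ‖s j‖) ^ ((1 : ℝ) / l') → Memℓp x 1) ∧
    ((∏ i, ‖lam - r i‖) ^ ((1 : ℝ) / l) ≥
        (∏ j, ‖s j‖) ^ ((1 : ℝ) / l') → ¬ Memℓp x 1) := by
  set L := Nat.lcm l l'
  have : NeZero L := ⟨Nat.lcm_ne_zero (NeZero.ne l) (NeZero.ne l')⟩
  set g : ℕ → ℂ := fun k => (lam - r k) / s k
  have hstep : ∀ k, x (k + 1) = g k * x k := fun k => by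
    rw [div_mul_eq_mul_div, eq_div_iff (hs _)]
    linear_combination hrec k
  have hl : l ∣ L := Nat.dvd_lcm_left l l'
  have hl' : l' ∣ L := Nat.dvd_lcm_right l l'
  have hper : Function.Periodic g L :=
    ((Fin.periodic_natCast_of_dvd hl).comp (fun i => lam - r i)).div
      ((Fin.periodic_natCast_of_dvd hl').comp s)
  set C := ∏ j ∈ range L, g j
  have hxL : ∀ k, ‖x (k + L)‖ = ‖C‖ * ‖x k‖ := fun k => by
    rw [add_period_eq_prod_mul_of_succ hstep hper, norm_mul]
  have hC : ‖C‖ = (∏ i, ‖lam - r i‖) ^ (L / l) / (∏ j, ‖s j‖) ^ (L / l') := by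
    simp only [C, g]
    rw [prod_div_distrib, Fin.prod_range_eq_pow_of_dvd (fun i => lam - r i) hl,
      Fin.prod_range_eq_pow_of_dvd s hl', norm_div, norm_pow, norm_pow, norm_prod, norm_prod]
  have hQ : 0 < ∏ j, ‖s j‖ := prod_pos fun j _ => norm_pos_iff.2 (hs j)
  have hcmp : (∏ i, ‖lam - r i‖) ^ ((1 : ℝ) / l) < (∏ j, ‖s j‖) ^ ((1 : ℝ) / l') ↔ ‖C‖ < 1 := by
    rw [← pow_lt_pow_iff_left₀ (by positivity) (by positivity) (NeZero.ne L),
      Real.rpow_one_div_pow_of_dvd (by positivity) (NeZero.ne l) hl,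
      Real.rpow_one_div_pow_of_dvd (by positivity) (NeZero.ne l') hl', hC,
      div_lt_one (pow_pos hQ _)]
  rw [memℓp_one_iff_summable_norm, ge_iff_le, ← not_lt, hcmp, not_lt]
  constructor
  · exact fun h => summable_norm_of_norm_add_period_le (norm_nonneg C) h (fun k => (hxL k).le)
  · intro h hsum
    refine not_tendsto_zero_of_norm_le_norm_add_period (p := L) (fun k => ?_) hx0
      (tendsto_zero_iff_norm_tendsto_zero.2 hsum.tendsto_atTop_zero)
    rw [hxL]
    exact le_mul_of_one_le_left (norm_nonneg _) h
end

section
/- The continuous spectrum of B on c₀ equals the boundary set {λ ∈ ℂ : (|λ - r₁|⋯|λ - r_l|)^{1/l} = (|s₁|⋯|s_{l'}|)^{1/l'}}. -/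
/-!
Write `T = B - λ` as the lower bidiagonal matrix `bidiag a b` with `a k = r k - λ` (period `l`)
on the diagonal and `b k = s k` (period `l'`) below it, and let `ρa`, `ρb` be the geometric means
of `‖a‖` and `‖b‖` over a period. A product of `t` consecutive values of a periodic sequence is
within constant factors of `ρ ^ t`, so the entries of the formal inverse of `T` behave like
`(ρb / ρa) ^ (k - m)`, and the left null vector `∏ j < k, -a j / b j` like `(ρa / ρb) ^ k`.

* If `ρb < ρa`, the formal inverse is a bounded operator, so `T` is bounded below.
* If `ρa < ρb`, the left null vector is summable and gives a nonzero functional on `c₀`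
  vanishing on the range of `T`.
* If `ρa = ρb`, the columns of the formal inverse are bounded above and below. Multiplying them
  by ramps of length `n` gives vectors that `T` maps within `O(1 / n)` of the unit vectors, so
  the range is dense, while a column cut off by a tent has norm `≈ 1` and image `O(1 / n)`, so
  `T` is not bounded below.
-/

open Filter Topology Finset Function ZeroAtInfty

noncomputable section

def geomMean (f : ℕ → ℝ) (p : ℕ) : ℝ := (∏ j ∈ range p, f j) ^ ((1 : ℝ) / p)

section GeomMean

variable {f : ℕ → ℝ} {p : ℕ}

lemma geomMean_nonneg (hf : ∀ k, 0 ≤ f k) : 0 ≤ geomMean f p :=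
  Real.rpow_nonneg (prod_nonneg fun j _ => hf j) _

lemma geomMean_pos (hf : ∀ k, 0 < f k) : 0 < geomMean f p :=
  Real.rpow_pos_of_pos (prod_pos fun j _ => hf j) _

lemma geomMean_pow (hf : ∀ k, 0 ≤ f k) (hp : p ≠ 0) :
    geomMean f p ^ p = ∏ j ∈ range p, f j := by
  rw [geomMean, one_div, Real.rpow_inv_natCast_pow (prod_nonneg fun j _ => hf j) hp]

lemma geomMean_inv (hf : ∀ k, 0 ≤ f k) :
    geomMean (fun k => (f k)⁻¹) p = (geomMean f p)⁻¹ := by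
  rw [geomMean, geomMean, prod_inv_distrib, Real.inv_rpow (prod_nonneg fun j _ => hf j)]

end GeomMean

namespace Function.Periodic

section CommMonoid

variable {M : Type*} [CommMonoid M] {f : ℕ → M} {p : ℕ}

lemma prod_range_shift (hf : Periodic f p) (m : ℕ) :
    ∏ j ∈ range p, f (m + j) = ∏ j ∈ range p, f j := by
  induction m with
  | zero => simp
  | succ m ih =>
    rw [← ih]
    cases p with
    | zero => simp
    | succ q =>
      rw [prod_range_succ, prod_range_succ' (fun j => f (m + j)), add_zero,
        show m + 1 + q = m + (q + 1) by omega, hf m]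
      exact congrArg (· * f m) (prod_congr rfl fun j _ => by rw [add_assoc, add_comm 1 j])

lemma prod_range_add_period (hf : Periodic f p) (m t : ℕ) :
    ∏ j ∈ range (t + p), f (m + j) = (∏ j ∈ range t, f (m + j)) * ∏ j ∈ range p, f j := by
  rw [prod_range_add, ← hf.prod_range_shift (m + t)]
  simp_rw [add_assoc]

lemma prod_range_mod (hf : Periodic f p) (m t : ℕ) :
    ∏ j ∈ range t, f (m % p + j) = ∏ j ∈ range t, f (m + j) :=
  prod_congr rfl fun j _ => by
    rw [← hf.map_mod_nat (m + j), ← hf.map_mod_nat (m % p + j), Nat.mod_add_mod]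

end CommMonoid

variable {f : ℕ → ℝ} {p : ℕ}

lemma le_sum_range (hf : Periodic f p) (hp : p ≠ 0) (hf0 : ∀ k, 0 ≤ f k) (k : ℕ) :
    f k ≤ ∑ j ∈ range p, f j :=
  hf.map_mod_nat k ▸
    single_le_sum (fun j _ => hf0 j) (mem_range.2 (Nat.mod_lt _ (Nat.pos_of_ne_zero hp)))

lemma ne_zero_of_geomMean_pos (hf : Periodic f p) (hp : p ≠ 0) (h : 0 < geomMean f p) (k : ℕ) :
    f k ≠ 0 := by
  intro hk
  have hprod : ∏ j ∈ range p, f j = 0 :=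
    prod_eq_zero (mem_range.2 (Nat.mod_lt k (Nat.pos_of_ne_zero hp))) (hf.map_mod_nat k ▸ hk)
  rw [geomMean, hprod, Real.zero_rpow (by positivity)] at h
  exact h.false

/-- A window splits into whole periods, each contributing `∏ j ∈ range p, f j ≤ σ ^ p`, and a
remainder, which takes only finitely many values. -/
lemma exists_prod_le_mul_pow (hf : Periodic f p) (hp : p ≠ 0) (hf0 : ∀ k, 0 ≤ f k) {σ : ℝ}
    (hσ : 0 < σ) (hfσ : geomMean f p ≤ σ) :
    ∃ C > 0, ∀ m t, ∏ j ∈ range t, f (m + j) ≤ C * σ ^ t := by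
  set C := ∑ m ∈ range p, ∑ t ∈ range p, (∏ j ∈ range t, f (m + j)) / σ ^ t
  have hterm : ∀ m t, 0 ≤ (∏ j ∈ range t, f (m + j)) / σ ^ t := fun m t =>
    div_nonneg (prod_nonneg fun j _ => hf0 _) (by positivity)
  have hbase : ∀ m t, t < p → ∏ j ∈ range t, f (m + j) ≤ C * σ ^ t := by
    intro m t ht
    rw [← hf.prod_range_mod, ← div_le_iff₀ (by positivity)]
    exact (single_le_sum (fun t _ => hterm _ t) (mem_range.2 ht)).trans
      (single_le_sum (fun m _ => sum_nonneg fun t _ => hterm m t)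
        (mem_range.2 (Nat.mod_lt m (Nat.pos_of_ne_zero hp))))
  have hC : 0 < C := one_pos.trans_le (by simpa using hbase 0 0 (Nat.pos_of_ne_zero hp))
  have hperiod : ∏ j ∈ range p, f j ≤ σ ^ p :=
    geomMean_pow hf0 hp ▸ pow_le_pow_left₀ (geomMean_nonneg hf0) hfσ p
  refine ⟨C, hC, fun m t => ?_⟩
  induction t using Nat.strong_induction_on with
  | _ t ih =>
    rcases lt_or_ge t p with ht | ht
    · exact hbase m t ht
    · obtain ⟨t, rfl⟩ := Nat.exists_eq_add_of_le' ht
      rw [hf.prod_range_add_period, pow_add, ← mul_assoc]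
      exact mul_le_mul (ih t (by omega)) hperiod (prod_nonneg fun j _ => hf0 _) (by positivity)

lemma exists_mul_pow_le_prod (hf : Periodic f p) (hp : p ≠ 0) (hf0 : ∀ k, 0 < f k) {σ : ℝ}
    (hσ : 0 < σ) (hfσ : σ ≤ geomMean f p) :
    ∃ c > 0, ∀ m t, c * σ ^ t ≤ ∏ j ∈ range t, f (m + j) := by
  obtain ⟨C, hC, hCb⟩ := (hf.comp Inv.inv).exists_prod_le_mul_pow hp
    (fun k => (inv_pos.2 (hf0 k)).le) (inv_pos.2 hσ)
    (by rw [comp_def, geomMean_inv fun k => (hf0 k).le]; exact inv_anti₀ hσ hfσ)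
  refine ⟨C⁻¹, inv_pos.2 hC, fun m t => ?_⟩
  have hP : 0 < ∏ j ∈ range t, f (m + j) := prod_pos fun j _ => hf0 _
  have h := hCb m t
  simp only [comp_apply, prod_inv_distrib, inv_pow] at h
  rw [inv_le_iff_one_le_mul₀' hP, ← mul_assoc, ← div_eq_mul_inv, one_le_div (by positivity)] at h
  rw [inv_mul_le_iff₀ hC, mul_comm]
  exact h

end Function.Periodic

namespace ZeroAtInftyContinuousMap

section Norm

variable {α E : Type*} [TopologicalSpace α] [SeminormedAddCommGroup E]

lemma norm_apply_le (x : C₀(α, E)) (k : α) : ‖x k‖ ≤ ‖x‖ :=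
  norm_toBCF_eq_norm (f := x) ▸ x.toBCF.norm_coe_le_norm k

lemma norm_le_of_forall {x : C₀(α, E)} {C : ℝ} (hC : 0 ≤ C) (h : ∀ k, ‖x k‖ ≤ C) : ‖x‖ ≤ C :=
  norm_toBCF_eq_norm (f := x) ▸ (BoundedContinuousFunction.norm_le hC).2 h

end Norm

def ofTendsto {β : Type*} [TopologicalSpace β] [Zero β] (v : ℕ → β)
    (hv : Tendsto v atTop (𝓝 0)) : C₀(ℕ, β) :=
  ⟨⟨v, continuous_of_discreteTopology⟩, by rwa [cocompact_eq_atTop]⟩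

@[simp] lemma coe_ofTendsto {β : Type*} [TopologicalSpace β] [Zero β] (v : ℕ → β)
    (hv : Tendsto v atTop (𝓝 0)) : ⇑(ofTendsto v hv) = v := rfl

def single (m : ℕ) : C₀(ℕ, ℂ) :=
  ofTendsto (Pi.single m 1) <| tendsto_nhds_of_eventually_eq <|
    eventually_atTop.2 ⟨m + 1, fun k hk => Pi.single_eq_of_ne (by omega) _⟩

@[simp] lemma coe_single (m : ℕ) : ⇑(single m) = Pi.single m 1 := rfl

def truncate (x : C₀(ℕ, ℂ)) (N : ℕ) : C₀(ℕ, ℂ) :=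
  ofTendsto (fun k => if k < N then x k else 0) <| tendsto_nhds_of_eventually_eq <|
    eventually_atTop.2 ⟨N, fun k hk => if_neg (by omega)⟩

lemma truncate_mem_span_single (x : C₀(ℕ, ℂ)) (N : ℕ) :
    truncate x N ∈ Submodule.span ℂ (Set.range single) := by
  induction N with
  | zero =>
    have h : truncate x 0 = 0 := by ext k; simp [truncate]
    exact h ▸ zero_mem _
  | succ N ih =>
    have h : truncate x (N + 1) = truncate x N + x N • single N := by
      ext k
      simp only [truncate, coe_ofTendsto, coe_add, coe_smul, coe_single, Pi.add_apply,
        Pi.smul_apply, Pi.single_apply, smul_eq_mul]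
      split_ifs <;> first | omega | simp_all
    rw [h]
    exact add_mem ih (Submodule.smul_mem _ _ (Submodule.subset_span ⟨N, rfl⟩))

lemma dense_span_single : Dense (Submodule.span ℂ (Set.range single) : Set C₀(ℕ, ℂ)) := by
  refine Metric.dense_iff.2 fun x ε hε => ?_
  have hx : Tendsto x atTop (𝓝 0) := cocompact_eq_atTop (α := ℕ) ▸ x.zero_at_infty'
  obtain ⟨N, hN⟩ := Metric.tendsto_atTop.1 hx (ε / 2) (half_pos hε)
  refine ⟨truncate x N, ?_, truncate_mem_span_single x N⟩
  rw [Metric.mem_ball, dist_eq_norm]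
  refine (norm_le_of_forall (half_pos hε).le fun k => ?_).trans_lt (half_lt_self hε)
  by_cases hk : k < N
  · simp [truncate, hk, (half_pos hε).le]
  · simpa [truncate, hk] using (hN k (not_lt.1 hk)).le

lemma summable_mul_apply {u : ℕ → ℂ} (hu : Summable (‖u ·‖)) (x : C₀(ℕ, ℂ)) :
    Summable fun k => u k * x k :=
  Summable.of_norm_bounded (hu.mul_right ‖x‖) fun k => by
    rw [norm_mul]; exact mul_le_mul_of_nonneg_left (norm_apply_le x k) (norm_nonneg _)

def weightedSumCLM (u : ℕ → ℂ) (hu : Summable (‖u ·‖)) : C₀(ℕ, ℂ) →L[ℂ] ℂ :=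
  LinearMap.mkContinuous
    { toFun x := ∑' k, u k * x k
      map_add' x y := by
        simp only [coe_add, Pi.add_apply, mul_add]
        exact (summable_mul_apply hu x).tsum_add (summable_mul_apply hu y)
      map_smul' c x := by
        simp only [coe_smul, Pi.smul_apply, smul_eq_mul, RingHom.id_apply, ← tsum_mul_left]
        congr 1; ext k; ring }
    (∑' k, ‖u k‖) fun x => tsum_of_norm_bounded (hu.hasSum.mul_right ‖x‖) fun k => by
      rw [norm_mul]; exact mul_le_mul_of_nonneg_left (norm_apply_le x k) (norm_nonneg _)

end ZeroAtInftyContinuousMap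

def IsBoundedBelow {E F : Type*} [Norm E] [Norm F] (f : E → F) : Prop :=
  ∃ c > (0 : ℝ), ∀ x, c * ‖x‖ ≤ ‖f x‖

section Spectrum

variable {𝕜 E : Type*} [NontriviallyNormedField 𝕜] [SeminormedAddCommGroup E] [NormedSpace 𝕜 E]

lemma IsUnit.isBoundedBelow {T : E →L[𝕜] E} (hT : IsUnit T) : IsBoundedBelow T := by
  obtain ⟨u, rfl⟩ := hT
  refine ⟨(‖(↑u⁻¹ : E →L[𝕜] E)‖ + 1)⁻¹, by positivity, fun x => ?_⟩
  rw [inv_mul_le_iff₀ (by positivity)]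
  calc ‖x‖ = ‖(↑u⁻¹ * ↑u : E →L[𝕜] E) x‖ := by rw [Units.inv_mul]; rfl
    _ ≤ ‖(↑u⁻¹ : E →L[𝕜] E)‖ * ‖(u : E →L[𝕜] E) x‖ := (↑u⁻¹ : E →L[𝕜] E).le_opNorm _
    _ ≤ (‖(↑u⁻¹ : E →L[𝕜] E)‖ + 1) * ‖(u : E →L[𝕜] E) x‖ := by gcongr; linarith

lemma mem_spectrum_of_not_isBoundedBelow {B : E →L[𝕜] E} {lam : 𝕜}
    (h : ¬IsBoundedBelow ⇑(B - lam • 1)) : lam ∈ spectrum 𝕜 B := by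
  rw [spectrum.mem_iff, Algebra.algebraMap_eq_smul_one, ← neg_sub, IsUnit.neg_iff]
  exact fun hu => h hu.isBoundedBelow

end Spectrum

def bidiag (a b v : ℕ → ℂ) : ℕ → ℂ
  | 0 => a 0 * v 0
  | k + 1 => b k * v k + a (k + 1) * v (k + 1)

/-- Column `m` of the inverse of `bidiag a b`. -/
def green (a b : ℕ → ℂ) (m k : ℕ) : ℂ :=
  if m ≤ k then (∏ j ∈ range (k - m), -b (m + j)) / ∏ j ∈ range (k - m + 1), a (m + j) else 0

/-- `1` on `[0, N]`, then decreasing linearly to `0` on `[N, N + n]`. -/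
def cutoff (N n k : ℕ) : ℂ := ((min n (N + n - k) : ℕ) : ℂ) / n

namespace Bidiag

variable {a b : ℕ → ℂ}

lemma bidiag_mul_zero (φ v : ℕ → ℂ) : bidiag a b (φ * v) 0 = φ 0 * bidiag a b v 0 := by
  simp only [bidiag, Pi.mul_apply]; ring

lemma bidiag_mul_succ (φ v : ℕ → ℂ) (k : ℕ) :
    bidiag a b (φ * v) (k + 1) =
      φ (k + 1) * bidiag a b v (k + 1) + (φ k - φ (k + 1)) * (b k * v k) := by
  simp only [bidiag, Pi.mul_apply]; ring

lemma green_of_lt {m k : ℕ} (h : k < m) : green a b m k = 0 := if_neg (by omega)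

lemma green_self (m : ℕ) : green a b m m = (a m)⁻¹ := by simp [green]

lemma green_succ {m k : ℕ} (h : m ≤ k) (hk : a (k + 1) ≠ 0) :
    green a b m (k + 1) = -b k / a (k + 1) * green a b m k := by
  have hm : m ≤ k + 1 := by omega
  simp only [green, if_pos h, if_pos hm, show k + 1 - m = k - m + 1 by omega, prod_range_succ,
    show m + (k - m) = k by omega, show m + (k - m + 1) = k + 1 by omega]
  field_simp

lemma bidiag_green (ha : ∀ k, a k ≠ 0) (m : ℕ) : bidiag a b (green a b m) = Pi.single m 1 := by
  funext k
  cases k with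
  | zero =>
    rcases Nat.eq_zero_or_pos m with rfl | hm
    · simp [bidiag, green_self, ha 0]
    · simp [bidiag, green_of_lt hm, hm.ne]
  | succ k =>
    rcases lt_trichotomy m (k + 1) with h | rfl | h
    · rw [bidiag, green_succ (by omega) (ha _), Pi.single_eq_of_ne (by omega)]
      field_simp [ha (k + 1)]
      ring
    · simp [bidiag, green_of_lt (Nat.lt_succ_self k), green_self, ha]
    · simp [bidiag, green_of_lt h, green_of_lt (Nat.lt_of_succ_lt h), h.ne']

lemma eq_sum_green (ha : ∀ k, a k ≠ 0) {x y : ℕ → ℂ} (h : bidiag a b x = y) (n : ℕ) :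
    x n = ∑ m ∈ range (n + 1), y m * green a b m n := by
  induction n with
  | zero =>
    simp only [zero_add, range_one, sum_singleton, green_self, ← h, bidiag]
    field_simp [ha 0]
  | succ n ih =>
    have hstep : ∀ m ∈ range (n + 1),
        y m * green a b m (n + 1) = -b n / a (n + 1) * (y m * green a b m n) :=
      fun m hm => by rw [green_succ (by simpa [Nat.lt_succ_iff] using hm) (ha _)]; ring
    rw [sum_range_succ, sum_congr rfl hstep, ← mul_sum, ← ih, green_self, ← h, bidiag]
    field_simp [ha (n + 1)]
    ring

lemma cutoff_of_le {N n k : ℕ} (hn : n ≠ 0) (h : k ≤ N) : cutoff N n k = 1 := by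
  rw [cutoff, min_eq_left (by omega), div_self (Nat.cast_ne_zero.2 hn)]

lemma cutoff_of_ge {N n k : ℕ} (h : N + n ≤ k) : cutoff N n k = 0 := by
  simp [cutoff, show N + n - k = 0 by omega]

lemma norm_cutoff_sub_le (N n k : ℕ) : ‖cutoff N n k - cutoff N n (k + 1)‖ ≤ 1 / n := by
  rw [cutoff, cutoff, ← sub_div, norm_div, Complex.norm_natCast]
  gcongr
  rcases (show min n (N + n - k) = min n (N + n - (k + 1)) ∨
      min n (N + n - k) = min n (N + n - (k + 1)) + 1 by omega) with h | h <;>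
    simp [h]

open ZeroAtInftyContinuousMap

variable {T : C₀(ℕ, ℂ) →L[ℂ] C₀(ℕ, ℂ)}

def cutoffMul (N n : ℕ) (v : ℕ → ℂ) : C₀(ℕ, ℂ) :=
  ofTendsto (cutoff N n * v) <| tendsto_nhds_of_eventually_eq <|
    eventually_atTop.2 ⟨N + n, fun k hk => by simp [cutoff_of_ge hk]⟩

lemma apply_single (hT : ∀ x, ⇑(T x) = bidiag a b x) (k : ℕ) :
    T (single k) = a k • single k + b k • single (k + 1) := by
  ext j
  rw [hT]
  cases j with
  | zero =>
    rcases Nat.eq_zero_or_pos k with rfl | hk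
    · simp [bidiag]
    · simp [bidiag, hk.ne']
  | succ j =>
    simp only [bidiag, coe_single, Pi.single_apply, ZeroAtInftyContinuousMap.coe_add,
      ZeroAtInftyContinuousMap.coe_smul, Pi.add_apply, Pi.smul_apply, smul_eq_mul]
    split_ifs <;> first | omega | simp_all

lemma injective_of_ne_zero (hT : ∀ x, ⇑(T x) = bidiag a b x) (ha : ∀ k, a k ≠ 0) : Injective T := by
  refine (injective_iff_map_eq_zero T).2 fun x hx => ?_
  ext n
  simp [eq_sum_green ha (hT x).symm n, hx]

lemma not_denseRange_of_summable (hT : ∀ x, ⇑(T x) = bidiag a b x) {u : ℕ → ℂ}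
    (hu : Summable (‖u ·‖)) (hu0 : u 0 ≠ 0) (hrec : ∀ k, u k * a k + u (k + 1) * b k = 0) :
    ¬DenseRange T := by
  set g := weightedSumCLM u hu
  have hg : ∀ k, g (single k) = u k := fun k => by
    simp only [g, weightedSumCLM, LinearMap.mkContinuous_apply, LinearMap.coe_mk, AddHom.coe_mk,
      coe_single]
    rw [tsum_eq_single k fun j hj => by simp [hj]]
    simp
  have hgT : g.comp T = 0 := ContinuousLinearMap.ext_on dense_span_single <| by
    rintro _ ⟨k, rfl⟩
    simp only [ContinuousLinearMap.comp_apply, apply_single hT, map_add, map_smul, hg,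
      smul_eq_mul, _root_.zero_apply]
    linear_combination hrec k
  intro hdense
  have hg0 : ⇑g = 0 := hdense.equalizer g.continuous continuous_zero <|
    funext fun x => DFunLike.congr_fun hgT x
  exact hu0 (by simpa [hg] using congrFun hg0 (single 0))

lemma isBoundedBelow_of_norm_green_le (hT : ∀ x, ⇑(T x) = bidiag a b x) (ha : ∀ k, a k ≠ 0)
    {C θ : ℝ} (hC : 0 < C) (hθ0 : 0 ≤ θ) (hθ1 : θ < 1)
    (hG : ∀ m k, ‖green a b m k‖ ≤ C * θ ^ (k - m)) : IsBoundedBelow T := by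
  have hθ : 0 < 1 - θ := sub_pos.2 hθ1
  refine ⟨(C * (1 - θ)⁻¹)⁻¹, by positivity, fun x => ?_⟩
  rw [inv_mul_le_iff₀ (by positivity)]
  refine norm_le_of_forall (by positivity) fun n => ?_
  have hgeom : ∑ m ∈ range (n + 1), θ ^ (n - m) ≤ (1 - θ)⁻¹ := by
    have h := sum_range_reflect (fun j => θ ^ j) (n + 1)
    simp only [add_tsub_cancel_right] at h
    rw [h, ← tsum_geometric_of_lt_one hθ0 hθ1]
    exact (summable_geometric_of_lt_one hθ0 hθ1).sum_le_tsum _ fun _ _ => by positivity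
  calc ‖x n‖ = ‖∑ m ∈ range (n + 1), T x m * green a b m n‖ := by
        rw [← eq_sum_green ha (hT x).symm]
    _ ≤ ∑ m ∈ range (n + 1), ‖T x‖ * (C * θ ^ (n - m)) := norm_sum_le_of_le _ fun m _ => by
        rw [norm_mul]; exact mul_le_mul (norm_apply_le _ _) (hG m n) (norm_nonneg _) (norm_nonneg _)
    _ = C * (∑ m ∈ range (n + 1), θ ^ (n - m)) * ‖T x‖ := by rw [← mul_sum, ← mul_sum]; ring
    _ ≤ C * (1 - θ)⁻¹ * ‖T x‖ := by gcongr

/-- By `bidiag_mul_succ`, the error only sees the increments `≤ 1 / n` of the ramp. -/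
lemma norm_apply_cutoffMul_green_sub_single_le (hT : ∀ x, ⇑(T x) = bidiag a b x)
    (ha : ∀ k, a k ≠ 0) {M X : ℝ} (hb : ∀ k, ‖b k‖ ≤ M) {m : ℕ} (hX : ∀ k, ‖green a b m k‖ ≤ X)
    {N n : ℕ} (hmN : m ≤ N) (hn : n ≠ 0) :
    ‖T (cutoffMul N n (green a b m)) - single m‖ ≤ M * X / n := by
  have hM : 0 ≤ M := (norm_nonneg _).trans (hb 0)
  have hX0 : 0 ≤ X := (norm_nonneg _).trans (hX 0)
  have hsingle : ∀ k, single m k = cutoff N n k * bidiag a b (green a b m) k := fun k => by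
    rw [bidiag_green ha, coe_single, Pi.single_apply]
    split_ifs with h
    · rw [h, cutoff_of_le hn hmN, mul_one]
    · rw [mul_zero]
  refine norm_le_of_forall (by positivity) fun k => ?_
  rw [ZeroAtInftyContinuousMap.coe_sub, Pi.sub_apply, hT, cutoffMul, coe_ofTendsto, hsingle]
  cases k with
  | zero => rw [bidiag_mul_zero, sub_self, norm_zero]; positivity
  | succ k =>
    rw [bidiag_mul_succ, add_sub_cancel_left, norm_mul, norm_mul]
    calc ‖cutoff N n k - cutoff N n (k + 1)‖ * (‖b k‖ * ‖green a b m k‖) ≤ 1 / n * (M * X) :=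
          mul_le_mul (norm_cutoff_sub_le N n k) (mul_le_mul (hb k) (hX k) (norm_nonneg _) hM)
            (by positivity) (by positivity)
      _ = M * X / n := by ring

lemma denseRange_of_norm_green_le (hT : ∀ x, ⇑(T x) = bidiag a b x) (ha : ∀ k, a k ≠ 0) {M : ℝ}
    (hb : ∀ k, ‖b k‖ ≤ M) (hG : ∀ m, ∃ X, ∀ k, ‖green a b m k‖ ≤ X) : DenseRange T := by
  have hsingle : ∀ m, single m ∈ closure (Set.range T) := by
    intro m
    obtain ⟨X, hX⟩ := hG m
    refine mem_closure_of_tendsto (f := fun n : ℕ => T (cutoffMul m (n + 1) (green a b m)))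
      (b := atTop) ?_ (Eventually.of_forall fun n => Set.mem_range_self _)
    rw [tendsto_iff_norm_sub_tendsto_zero]
    refine squeeze_zero (fun _ => norm_nonneg _) (fun n => ?_)
      ((tendsto_const_div_atTop_nhds_zero_nat (M * X)).comp (tendsto_add_atTop_nat 1))
    exact norm_apply_cutoffMul_green_sub_single_le hT ha hb hX le_rfl n.succ_ne_zero
  have hspan : Submodule.span ℂ (Set.range single) ≤
      (LinearMap.range (T : C₀(ℕ, ℂ) →ₗ[ℂ] C₀(ℕ, ℂ))).topologicalClosure :=
    Submodule.span_le.2 <| by rintro _ ⟨m, rfl⟩; simpa [LinearMap.coe_range] using hsingle m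
  refine dense_closure.1 (dense_span_single.mono ?_)
  simpa [LinearMap.coe_range] using SetLike.coe_subset_coe.2 hspan

lemma not_isBoundedBelow_of_norm_green_bounds (hT : ∀ x, ⇑(T x) = bidiag a b x)
    (ha : ∀ k, a k ≠ 0) {M X c : ℝ} (hb : ∀ k, ‖b k‖ ≤ M) (hX : ∀ k, ‖green a b 0 k‖ ≤ X)
    (hc : 0 < c) (hcX : ∀ k, c ≤ ‖green a b 0 k‖) : ¬IsBoundedBelow T := by
  rintro ⟨δ, hδ, hbdd⟩
  have hMX : 0 ≤ M * X := mul_nonneg ((norm_nonneg _).trans (hb 0)) ((norm_nonneg _).trans (hX 0))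
  -- `w` is `green a b 0` times the tent rising on `[0, n]` and falling on `[n, 2 n]`
  have key : ∀ n : ℕ, n ≠ 0 → δ * c ≤ 2 * (M * X) / n := by
    intro n hn
    set w := cutoffMul n n (green a b 0) - cutoffMul 0 n (green a b 0)
    have hw : w n = green a b 0 n := by
      simp [w, cutoffMul, cutoff_of_le hn le_rfl, cutoff_of_ge (show 0 + n ≤ n by omega)]
    have h1 := norm_apply_cutoffMul_green_sub_single_le hT ha hb hX (Nat.zero_le n) hn
    have h2 := norm_apply_cutoffMul_green_sub_single_le hT ha hb hX le_rfl hn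
    calc δ * c ≤ δ * ‖w‖ := by gcongr; exact (hcX n).trans (hw ▸ norm_apply_le w n)
      _ ≤ ‖T w‖ := hbdd w
      _ = ‖(T (cutoffMul n n (green a b 0)) - single 0) -
            (T (cutoffMul 0 n (green a b 0)) - single 0)‖ := by simp [w]
      _ ≤ 2 * (M * X) / n := by
        rw [mul_div_assoc, two_mul]; exact (norm_sub_le _ _).trans (add_le_add h1 h2)
  obtain ⟨n, hn⟩ := exists_nat_gt (2 * (M * X) / (δ * c))
  have hn0 : (0 : ℝ) < n := lt_of_le_of_lt (by positivity) hn
  have h := key n (by exact_mod_cast hn0.ne')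
  rw [div_lt_iff₀ (by positivity)] at hn
  rw [le_div_iff₀ hn0] at h
  linarith [mul_comm (n : ℝ) (δ * c)]

variable {l l' : ℕ}

lemma norm_green {m k : ℕ} (h : m ≤ k) :
    ‖green a b m k‖ =
      (∏ j ∈ range (k - m), ‖b (m + j)‖) / ∏ j ∈ range (k - m + 1), ‖a (m + j)‖ := by
  simp [green, h, norm_prod]

lemma exists_norm_green_le (ha : Periodic (‖a ·‖) l) (hb : Periodic (‖b ·‖) l') (hl : l ≠ 0)
    (hl' : l' ≠ 0) (ha0 : ∀ k, a k ≠ 0) (hb0 : ∀ k, b k ≠ 0) :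
    ∃ C > 0, ∀ m k, ‖green a b m k‖ ≤
      C * (geomMean (‖b ·‖) l' / geomMean (‖a ·‖) l) ^ (k - m) := by
  have hpa : ∀ k, 0 < ‖a k‖ := fun k => norm_pos_iff.2 (ha0 k)
  have hpb : ∀ k, 0 < ‖b k‖ := fun k => norm_pos_iff.2 (hb0 k)
  have hρa := geomMean_pos (p := l) hpa
  have hρb := geomMean_pos (p := l') hpb
  obtain ⟨Cb, hCb, hb'⟩ := hb.exists_prod_le_mul_pow hl' (fun k => (hpb k).le) hρb le_rfl
  obtain ⟨ca, hca, ha'⟩ := ha.exists_mul_pow_le_prod hl hpa hρa le_rfl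
  refine ⟨Cb / (ca * geomMean (‖a ·‖) l), div_pos hCb (mul_pos hca hρa), fun m k => ?_⟩
  rcases lt_or_ge k m with h | h
  · rw [green_of_lt h, norm_zero]
    exact mul_nonneg (div_pos hCb (mul_pos hca hρa)).le (pow_nonneg (div_pos hρb hρa).le _)
  rw [norm_green h]
  calc _ ≤ Cb * geomMean (‖b ·‖) l' ^ (k - m) / (ca * geomMean (‖a ·‖) l ^ (k - m + 1)) :=
        div_le_div₀ (mul_nonneg hCb.le (pow_nonneg hρb.le _)) (hb' m _)
          (mul_pos hca (pow_pos hρa _)) (ha' m _)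
    _ = _ := by rw [div_pow, pow_succ]; field_simp

lemma exists_le_norm_green (ha : Periodic (‖a ·‖) l) (hb : Periodic (‖b ·‖) l') (hl : l ≠ 0)
    (hl' : l' ≠ 0) (ha0 : ∀ k, a k ≠ 0) (hb0 : ∀ k, b k ≠ 0) :
    ∃ c > 0, ∀ m k, m ≤ k →
      c * (geomMean (‖b ·‖) l' / geomMean (‖a ·‖) l) ^ (k - m) ≤ ‖green a b m k‖ := by
  have hpa : ∀ k, 0 < ‖a k‖ := fun k => norm_pos_iff.2 (ha0 k)
  have hpb : ∀ k, 0 < ‖b k‖ := fun k => norm_pos_iff.2 (hb0 k)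
  have hρa := geomMean_pos (p := l) hpa
  have hρb := geomMean_pos (p := l') hpb
  obtain ⟨cb, hcb, hb'⟩ := hb.exists_mul_pow_le_prod hl' hpb hρb le_rfl
  obtain ⟨Ca, hCa, ha'⟩ := ha.exists_prod_le_mul_pow hl (fun k => (hpa k).le) hρa le_rfl
  refine ⟨cb / (Ca * geomMean (‖a ·‖) l), div_pos hcb (mul_pos hCa hρa), fun m k h => ?_⟩
  rw [norm_green h]
  calc _ = cb * geomMean (‖b ·‖) l' ^ (k - m) / (Ca * geomMean (‖a ·‖) l ^ (k - m + 1)) := by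
        rw [div_pow, pow_succ]; field_simp
    _ ≤ _ := div_le_div₀ (prod_nonneg fun j _ => norm_nonneg _) (hb' m _)
        (prod_pos fun j _ => hpa _) (ha' m _)

lemma summable_norm_prod_neg_div (ha : Periodic (‖a ·‖) l) (hb : Periodic (‖b ·‖) l')
    (hl : l ≠ 0) (hl' : l' ≠ 0) (hb0 : ∀ k, b k ≠ 0)
    (h : geomMean (‖a ·‖) l < geomMean (‖b ·‖) l') :
    Summable fun k => ‖∏ j ∈ range k, (-a j / b j)‖ := by
  have hρb := geomMean_pos (p := l') fun k => norm_pos_iff.2 (hb0 k)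
  have hρa : 0 ≤ geomMean (‖a ·‖) l := geomMean_nonneg fun k => norm_nonneg _
  obtain ⟨σ, hσa, hσb⟩ := exists_between h
  have hσ : 0 < σ := hρa.trans_lt hσa
  obtain ⟨Ca, hCa, ha'⟩ := ha.exists_prod_le_mul_pow hl (fun k => norm_nonneg _) hσ hσa.le
  obtain ⟨cb, hcb, hb'⟩ :=
    hb.exists_mul_pow_le_prod hl' (fun k => norm_pos_iff.2 (hb0 k)) hρb le_rfl
  refine Summable.of_nonneg_of_le (fun _ => norm_nonneg _) (fun k => ?_)
    ((summable_geometric_of_lt_one (div_pos hσ hρb).le ((div_lt_one hρb).2 hσb)).mul_left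
      (Ca / cb))
  simp only [norm_prod, norm_div, norm_neg, prod_div_distrib]
  calc _ ≤ Ca * σ ^ k / (cb * geomMean (‖b ·‖) l' ^ k) :=
        div_le_div₀ (mul_nonneg hCa.le (pow_nonneg hσ.le _)) (by simpa using ha' 0 k)
          (mul_pos hcb (pow_pos hρb _)) (by simpa using hb' 0 k)
    _ = _ := by rw [div_pow, mul_div_mul_comm]

lemma isBoundedBelow_of_geomMean_lt (hT : ∀ x, ⇑(T x) = bidiag a b x)
    (ha : Periodic (‖a ·‖) l) (hb : Periodic (‖b ·‖) l') (hl : l ≠ 0) (hl' : l' ≠ 0)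
    (hb0 : ∀ k, b k ≠ 0) (h : geomMean (‖b ·‖) l' < geomMean (‖a ·‖) l) : IsBoundedBelow T := by
  have hρb : 0 ≤ geomMean (‖b ·‖) l' := geomMean_nonneg fun k => norm_nonneg _
  have hρa : 0 < geomMean (‖a ·‖) l := hρb.trans_lt h
  have ha0 : ∀ k, a k ≠ 0 := fun k =>
    norm_ne_zero_iff.1 (ha.ne_zero_of_geomMean_pos hl hρa k)
  obtain ⟨C, hC, hG⟩ := exists_norm_green_le ha hb hl hl' ha0 hb0
  exact isBoundedBelow_of_norm_green_le hT ha0 hC (div_nonneg hρb hρa.le) ((div_lt_one hρa).2 h) hG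

lemma not_denseRange_of_geomMean_lt (hT : ∀ x, ⇑(T x) = bidiag a b x)
    (ha : Periodic (‖a ·‖) l) (hb : Periodic (‖b ·‖) l') (hl : l ≠ 0) (hl' : l' ≠ 0)
    (hb0 : ∀ k, b k ≠ 0) (h : geomMean (‖a ·‖) l < geomMean (‖b ·‖) l') : ¬DenseRange T :=
  not_denseRange_of_summable hT (summable_norm_prod_neg_div ha hb hl hl' hb0 h) (by simp)
    fun k => by rw [prod_range_succ]; field_simp [hb0 k]; ring

lemma injective_denseRange_not_isBoundedBelow_of_geomMean_eq
    (hT : ∀ x, ⇑(T x) = bidiag a b x) (ha : Periodic (‖a ·‖) l) (hb : Periodic (‖b ·‖) l')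
    (hl : l ≠ 0) (hl' : l' ≠ 0) (hb0 : ∀ k, b k ≠ 0)
    (h : geomMean (‖a ·‖) l = geomMean (‖b ·‖) l') :
    Injective T ∧ DenseRange T ∧ ¬IsBoundedBelow T := by
  have hρb := geomMean_pos (p := l') fun k => norm_pos_iff.2 (hb0 k)
  have ha0 : ∀ k, a k ≠ 0 := fun k =>
    norm_ne_zero_iff.1 (ha.ne_zero_of_geomMean_pos hl (h ▸ hρb) k)
  obtain ⟨C, -, hC⟩ := exists_norm_green_le ha hb hl hl' ha0 hb0
  obtain ⟨c, hc, hc'⟩ := exists_le_norm_green ha hb hl hl' ha0 hb0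
  simp only [h, div_self hρb.ne', one_pow, mul_one] at hC hc'
  have hbM := hb.le_sum_range hl' fun k => norm_nonneg _
  exact ⟨injective_of_ne_zero hT ha0, denseRange_of_norm_green_le hT ha0 hbM fun m => ⟨C, hC m⟩,
    not_isBoundedBelow_of_norm_green_bounds hT ha0 hbM (hC 0) hc (hc' 0 · (Nat.zero_le _))⟩

lemma geomMean_eq_of_denseRange_of_not_isBoundedBelow (hT : ∀ x, ⇑(T x) = bidiag a b x)
    (ha : Periodic (‖a ·‖) l) (hb : Periodic (‖b ·‖) l') (hl : l ≠ 0) (hl' : l' ≠ 0)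
    (hb0 : ∀ k, b k ≠ 0) (hdense : DenseRange T) (hT' : ¬IsBoundedBelow T) :
    geomMean (‖a ·‖) l = geomMean (‖b ·‖) l' := by
  rcases lt_trichotomy (geomMean (‖a ·‖) l) (geomMean (‖b ·‖) l') with h | h | h
  · exact absurd hdense (not_denseRange_of_geomMean_lt hT ha hb hl hl' hb0 h)
  · exact h
  · exact absurd (isBoundedBelow_of_geomMean_lt hT ha hb hl hl' hb0 h) hT'

end Bidiag

end

open Bidiag

/-- The continuous spectrum of `B` on `c₀` (those `λ` in the spectrum for which
`B - λI` is injective with dense range but does not have a bounded inverse) equals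
`{λ : (|λ-r₁|⋯|λ-r_l|)^{1/l} = (|s₁|⋯|s_{l'}|)^{1/l'}}`. -/
theorem stmt_9 (l l' : ℕ) [NeZero l] [NeZero l'] (r : Fin l → ℂ) (s : Fin l' → ℂ)
    (hs : ∀ j, s j ≠ 0)
    (B : ZeroAtInftyContinuousMap ℕ ℂ →L[ℂ] ZeroAtInftyContinuousMap ℕ ℂ)
    (hB0 : ∀ x : ZeroAtInftyContinuousMap ℕ ℂ, B x 0 = r 0 * x 0)
    (hB : ∀ (x : ZeroAtInftyContinuousMap ℕ ℂ) (k : ℕ),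
      B x (k + 1) = s (Fin.ofNat l' k) * x k + r (Fin.ofNat l (k + 1)) * x (k + 1)) :
    {lam : ℂ | lam ∈ spectrum ℂ B ∧ Function.Injective ⇑(B - lam • 1) ∧
        DenseRange ⇑(B - lam • 1) ∧
        ¬ ∃ c > (0 : ℝ), ∀ x : ZeroAtInftyContinuousMap ℕ ℂ, c * ‖x‖ ≤ ‖(B - lam • 1) x‖} =
      {lam : ℂ | (∏ i, ‖lam - r i‖) ^ ((1 : ℝ) / l) =
        (∏ j, ‖s j‖) ^ ((1 : ℝ) / l')} := by
  have hl : l ≠ 0 := NeZero.ne l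
  have hl' : l' ≠ 0 := NeZero.ne l'
  ext lam
  set a : ℕ → ℂ := fun k => r (Fin.ofNat l k) - lam
  set b : ℕ → ℂ := fun k => s (Fin.ofNat l' k)
  have hT : ∀ x, ⇑((B - lam • 1) x) = bidiag a b x := fun x => by
    funext k
    cases k <;> simp [bidiag, hB0, hB, a, b] <;> ring
  have hb0 : ∀ k, b k ≠ 0 := fun k => hs _
  have ha : Periodic (‖a ·‖) l := fun k => by simp [a, Fin.ofNat]
  have hb : Periodic (‖b ·‖) l' := fun k => by simp [b, Fin.ofNat]
  have hρa : (∏ i, ‖lam - r i‖) ^ ((1 : ℝ) / l) = geomMean (‖a ·‖) l := by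
    rw [geomMean, ← Fin.prod_univ_eq_prod_range]
    simp [a, norm_sub_rev]
  have hρb : (∏ j, ‖s j‖) ^ ((1 : ℝ) / l') = geomMean (‖b ·‖) l' := by
    rw [geomMean, ← Fin.prod_univ_eq_prod_range]
    simp [b]
  simp only [Set.mem_ofPred_eq, hρa, hρb]
  constructor
  · rintro ⟨-, -, hdense, hT'⟩
    exact geomMean_eq_of_denseRange_of_not_isBoundedBelow hT ha hb hl hl' hb0 hdense hT'
  · intro h
    obtain ⟨hinj, hdense, hT'⟩ :=
      injective_denseRange_not_isBoundedBelow_of_geomMean_eq hT ha hb hl hl' hb0 h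
    exact ⟨mem_spectrum_of_not_isBoundedBelow hT', hinj, hdense, hT'⟩
end
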